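/- For each integer i ≥ 1 and each real a with 1 < a < √2, the cubic polynomial P(y) = y³ + (i(a²-1)/(2a²))·y² - (1/a²)·y - i/(2a²) has exactly one positive real root, and this root lies in the open interval (1/a, 1/√(a²-1)). -/
import Mathlib


/-- The cubic polynomial arising from the parabolicity condition `Δ_i(a,h) = 1`
for the pantographic orbit `Pan(i,a,h)`, in the variable `y = sin λ`. -/
noncomputable def Pcubic (i a y : ℝ) : ℝ :=
  y ^ 3 + (i * (a ^ 2 - 1) / (2 * a ^ 2)) * y ^ 2 - (1 / a ^ 2) * y - i / (2 * a ^ 2)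

/-- Uniqueness of the positive root for the cleared-denominator cubic. -/
lemma cubic_uniq (n A y₁ y₂ : ℝ) (hn : 1 ≤ n) (hA : 1 < A) (h1 : 0 < y₁) (h2 : 0 < y₂)
    (e1 : 2*A*y₁^3 + n*(A-1)*y₁^2 - 2*y₁ - n = 0)
    (e2 : 2*A*y₂^3 + n*(A-1)*y₂^2 - 2*y₂ - n = 0) : y₁ = y₂ := by
  have hfac : (y₂ - y₁) * (2*A*(y₂^2 + y₁*y₂ + y₁^2) + n*(A-1)*(y₁+y₂) - 2) = 0 := by
    linear_combination e2 - e1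
  rcases mul_eq_zero.mp hfac with h | h
  · linarith
  · exfalso
    have k1 : y₁*(2*A*y₁^2 + n*(A-1)*y₁ - 2) = n := by linear_combination e1
    have p1 : 0 < 2*A*y₁^2 + n*(A-1)*y₁ - 2 := by
      by_contra hcon
      push_neg at hcon
      nlinarith
    have hA0 : 0 < A := lt_trans one_pos hA
    have t1 : 0 < A * y₂ ^ 2 := mul_pos hA0 (pow_pos h2 2)
    have t2 : 0 < A * (y₁ * y₂) := mul_pos hA0 (mul_pos h1 h2)
    have t3 : 0 ≤ n * (A - 1) * y₂ :=
      mul_nonneg (mul_nonneg (by linarith) (by linarith)) h2.le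
    nlinarith [t1, t2, t3, p1, h]

theorem stmt_6 (i : ℕ) (hi : 1 ≤ i) (a : ℝ) (ha₁ : 1 < a) (ha₂ : a < Real.sqrt 2) :
    (∃! y : ℝ, 0 < y ∧ Pcubic i a y = 0) ∧
    ∀ y : ℝ, 0 < y → Pcubic i a y = 0 →
      y ∈ Set.Ioo (1 / a) (1 / Real.sqrt (a ^ 2 - 1)) := by
  have ha0 : 0 < a := lt_trans one_pos ha₁
  have hA1 : 1 < a ^ 2 := by nlinarith
  have hA2 : a ^ 2 < 2 := by
    have h2 : Real.sqrt 2 ^ 2 = 2 := Real.sq_sqrt (by norm_num)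
    nlinarith [Real.sqrt_nonneg 2]
  have hn : (1:ℝ) ≤ (i:ℝ) := by exact_mod_cast hi
  have hA0 : (a:ℝ) ^ 2 ≠ 0 := by positivity
  -- rewrite Pcubic as a single fraction
  have hPform : ∀ y : ℝ,
      Pcubic i a y = (2*a^2*y^3 + (i:ℝ)*(a^2-1)*y^2 - 2*y - (i:ℝ)) / (2*a^2) := by
    intro y
    unfold Pcubic
    field_simp
  have hzero : ∀ y : ℝ, Pcubic i a y = 0 ↔
      2*a^2*y^3 + (i:ℝ)*(a^2-1)*y^2 - 2*y - (i:ℝ) = 0 := by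
    intro y
    rw [hPform y, div_eq_zero_iff]
    constructor
    · rintro (h | h)
      · exact h
      · exact absurd h (by positivity)
    · intro h; exact Or.inl h
  -- the square root endpoint
  set s := Real.sqrt (a ^ 2 - 1) with hs_def
  have hs2 : s ^ 2 = a ^ 2 - 1 := Real.sq_sqrt (by linarith)
  have hs0 : 0 < s := Real.sqrt_pos.mpr (by linarith)
  have hs1 : s < a := by nlinarith
  have hlt : 1 / a < 1 / s := by
    apply one_div_lt_one_div_of_lt hs0 hs1
  -- endpoint values
  have hPa : Pcubic i a (1 / a) < 0 := by
    rw [hPform]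
    apply div_neg_of_neg_of_pos _ (by positivity)
    have ha' : a ≠ 0 := ne_of_gt ha0
    have key : (2*a^2*(1/a)^3 + (i:ℝ)*(a^2-1)*(1/a)^2 - 2*(1/a) - (i:ℝ)) * a^2 = -(i:ℝ) := by
      field_simp
      ring
    have hpos : (0:ℝ) < a ^ 2 := by positivity
    nlinarith [key]
  have hPs : 0 < Pcubic i a (1 / s) := by
    rw [hPform]
    apply div_pos _ (by positivity)
    have hs' : s ≠ 0 := ne_of_gt hs0
    have key2 : 2*a^2 + (i:ℝ)*(a^2-1)*s - 2*s^2 - (i:ℝ)*s^3 = 2 := by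
      linear_combination (-2 - (i:ℝ)*s) * hs2
    have expand : 2*a^2*(1/s)^3 + (i:ℝ)*(a^2-1)*(1/s)^2 - 2*(1/s) - (i:ℝ)
        = (2*a^2 + (i:ℝ)*(a^2-1)*s - 2*s^2 - (i:ℝ)*s^3) / s^3 := by
      field_simp
    rw [expand, key2]
    positivity
  -- existence via IVT
  have hcont : Continuous fun y : ℝ => Pcubic i a y := by
    unfold Pcubic; fun_prop
  have hsub := intermediate_value_Ioo (le_of_lt hlt) hcont.continuousOn
  have h0mem : (0:ℝ) ∈ Set.Ioo (Pcubic i a (1/a)) (Pcubic i a (1/s)) := ⟨hPa, hPs⟩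
  obtain ⟨y₀, hy₀mem, hy₀⟩ := hsub h0mem
  have hy₀pos : 0 < y₀ := lt_trans (by positivity) hy₀mem.1
  have uniq : ∀ y : ℝ, 0 < y → Pcubic i a y = 0 → y = y₀ := by
    intro y hy hPy
    exact cubic_uniq (i:ℝ) (a^2) y y₀ hn hA1 hy hy₀pos
      ((hzero y).mp hPy) ((hzero y₀).mp hy₀)
  constructor
  · exact ⟨y₀, ⟨hy₀pos, hy₀⟩, fun y hy => uniq y hy.1 hy.2⟩
  · intro y hy hPy
    rw [uniq y hy hPy]
    exact hy₀mem
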